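/- Let n ≥ 1, let e be a unit vector in ℝⁿ⁺¹, let H₊ = {x ∈ 𝕊ⁿ | ⟪x, e⟫ > 0} be the open hemisphere determined by e, let E = {y ∈ ℝⁿ⁺¹ | ⟪y, e⟫ = 1} be the affine hyperplane tangent to 𝕊ⁿ at e, and let π : H₊ → E be the central (gnomonic) projection π(x) = ⟪x, e⟫⁻¹ • x. Then π is a homeomorphism from H₊ onto E, and for every subset S ⊆ H₊, S is spherically convex if and only if the image π(S) = {π(x) | x ∈ S} is a convex subset of ℝⁿ⁺¹. -/

import Mathlib

/-!
The gnomonic projection `x ↦ ⟪x, e⟫⁻¹ • x` is constant on rays, so on the plane `⟪y, e⟫ = 1` it is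
inverted by normalisation `y ↦ ‖y‖⁻¹ • y`. A geodesic arc of angle `θ < π` from `p` to `q` sweeps
out exactly the rays through the chord `[p, q]`, because
`sin θ • (cos t • p + sin t • w) = sin (θ - t) • p + sin t • q`; hence it projects onto the segment
between the projections of `p` and `q`. Two points of an open hemisphere are never antipodal, and
in dimension at least two any two unit vectors are joined by an arc, so spherical convexity of `S`
and convexity of its projection translate into each other.
-/

open scoped RealInnerProductSpace ENNReal
open Set

/-- Euclidean space `ℝ^m`. -/
noncomputable abbrev Euc (m : ℕ) : Type := EuclideanSpace ℝ (Fin m)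

/-- The unit sphere `𝕊ⁿ ⊆ ℝⁿ⁺¹`, as a subset of `ℝⁿ⁺¹`. -/
def uSphere (n : ℕ) : Set (Euc (n + 1)) := Metric.sphere 0 1

/-- `A` is a geodesic arc from `p` to `q` on the unit sphere: a set of the form
`{cos t • p + sin t • w | t ∈ [0, θ]}` with `θ ∈ [0, π]`, `w` a unit vector orthogonal
to `p`, and `cos θ • p + sin θ • w = q`. -/
def IsGeodesicArc {n : ℕ} (p q : Euc (n + 1)) (A : Set (Euc (n + 1))) : Prop :=
  ∃ θ : ℝ, θ ∈ Set.Icc 0 Real.pi ∧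
    ∃ w : Euc (n + 1), ‖w‖ = 1 ∧ ⟪p, w⟫ = 0 ∧
      Real.cos θ • p + Real.sin θ • w = q ∧
      A = {x | ∃ t ∈ Set.Icc (0 : ℝ) θ, x = Real.cos t • p + Real.sin t • w}

/-- `S ⊆ 𝕊ⁿ` is spherically convex: any two points of `S` are joined by some geodesic
arc contained in `S`. -/
def SphConvex {n : ℕ} (S : Set (Euc (n + 1))) : Prop :=
  ∀ p ∈ S, ∀ q ∈ S, ∃ A : Set (Euc (n + 1)), IsGeodesicArc p q A ∧ A ⊆ S

open Real Module

section Gnomonic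

variable {E : Type*} [NormedAddCommGroup E] [InnerProductSpace ℝ E]

def openHemisphere (e : E) : Set E := {x | x ∈ Metric.sphere 0 1 ∧ 0 < ⟪x, e⟫}

noncomputable def gnomonic (e x : E) : E := ⟪x, e⟫⁻¹ • x

def geodesicArc (p w : E) (θ : ℝ) : Set E :=
  {x | ∃ t ∈ Icc (0 : ℝ) θ, x = cos t • p + sin t • w}

lemma inner_gnomonic {e x : E} (hx : ⟪x, e⟫ ≠ 0) : ⟪gnomonic e x, e⟫ = 1 := by
  rw [gnomonic, real_inner_smul_left, inv_mul_cancel₀ hx]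

lemma gnomonic_smul (e x : E) {c : ℝ} (hc : c ≠ 0) : gnomonic e (c • x) = gnomonic e x := by
  simp only [gnomonic, real_inner_smul_left, smul_smul, mul_inv_rev, inv_mul_cancel_right₀ hc]

lemma norm_inv_smul_gnomonic {e x : E} (hx : x ∈ openHemisphere e) :
    ‖gnomonic e x‖⁻¹ • gnomonic e x = x := by
  obtain ⟨hx1, hxe⟩ := hx
  rw [mem_sphere_zero_iff_norm] at hx1
  rw [gnomonic, norm_smul, Real.norm_eq_abs, abs_of_pos (inv_pos.2 hxe), hx1, mul_one, inv_inv,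
    smul_smul, mul_inv_cancel₀ hxe.ne', one_smul]

lemma gnomonic_injOn (e : E) : InjOn (gnomonic e) (openHemisphere e) :=
  fun _ hx _ hy hxy => by
    rw [← norm_inv_smul_gnomonic hx, hxy, norm_inv_smul_gnomonic hy]

lemma ne_zero_of_inner_eq_one {e y : E} (hy : ⟪y, e⟫ = 1) : y ≠ 0 := by
  rintro rfl
  simp at hy

variable (e : E) in
noncomputable def gnomonicHomeomorph : openHemisphere e ≃ₜ {y : E | ⟪y, e⟫ = 1} where
  toFun x := ⟨gnomonic e x, inner_gnomonic x.2.2.ne'⟩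
  invFun y := ⟨‖(y : E)‖⁻¹ • (y : E), by
    have hy : (y : E) ≠ 0 := ne_zero_of_inner_eq_one y.2
    refine ⟨mem_sphere_zero_iff_norm.2 (norm_smul_inv_norm hy), ?_⟩
    rw [real_inner_smul_left, y.2, mul_one]
    exact inv_pos.2 (norm_pos_iff.2 hy)⟩
  left_inv x := Subtype.ext (norm_inv_smul_gnomonic x.2)
  right_inv y := Subtype.ext <| by
    have hy : (y : E) ≠ 0 := ne_zero_of_inner_eq_one y.2
    change gnomonic e (‖(y : E)‖⁻¹ • (y : E)) = y
    rw [gnomonic_smul e _ (inv_ne_zero (norm_ne_zero_iff.2 hy)), gnomonic, y.2, inv_one, one_smul]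
  continuous_toFun := by
    refine Continuous.subtype_mk ?_ _
    exact ((continuous_subtype_val.inner continuous_const).inv₀ fun x => x.2.2.ne').smul
      continuous_subtype_val
  continuous_invFun := by
    refine Continuous.subtype_mk ?_ _
    exact (continuous_subtype_val.norm.inv₀ fun y => norm_ne_zero_iff.2
      (ne_zero_of_inner_eq_one y.2)).smul continuous_subtype_val


lemma norm_cos_smul_add_sin_smul {p w : E} (hp : ‖p‖ = 1) (hw : ‖w‖ = 1) (hpw : ⟪p, w⟫ = 0)
    (t : ℝ) : ‖cos t • p + sin t • w‖ = 1 := by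
  have hsq : ‖cos t • p + sin t • w‖ ^ 2 = 1 := by
    rw [norm_add_sq_real, real_inner_smul_left, real_inner_smul_right, hpw, norm_smul, norm_smul,
      hp, hw, Real.norm_eq_abs, Real.norm_eq_abs]
    nlinarith [sin_sq_add_cos_sq t, sq_abs (sin t), sq_abs (cos t)]
  exact (pow_eq_one_iff_of_nonneg (norm_nonneg _) two_ne_zero).1 hsq

lemma sin_smul_arc {p w q : E} {θ : ℝ} (hpq : cos θ • p + sin θ • w = q) (t : ℝ) :
    sin θ • (cos t • p + sin t • w) = sin (θ - t) • p + sin t • q := by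
  rw [← hpq, sin_sub]
  match_scalars <;> ring

lemma gnomonic_smul_add_smul {e p q : E} {a b : ℝ} (hp : ⟪p, e⟫ ≠ 0) (hq : ⟪q, e⟫ ≠ 0)
    (hab : a * ⟪p, e⟫ + b * ⟪q, e⟫ ≠ 0) :
    gnomonic e (a • p + b • q) = AffineMap.lineMap (gnomonic e p) (gnomonic e q)
      (b * ⟪q, e⟫ / (a * ⟪p, e⟫ + b * ⟪q, e⟫)) := by
  rw [AffineMap.lineMap_apply_module]
  simp only [gnomonic, inner_add_left, real_inner_smul_left, smul_smul]
  match_scalars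
  · field_simp
    ring
  · field_simp

lemma sin_sub_mul_add_sin_mul_pos {θ t a c : ℝ} (hθ : θ ∈ Ioo 0 π) (ht : t ∈ Icc 0 θ)
    (ha : 0 < a) (hc : 0 < c) : 0 < sin (θ - t) * a + sin t * c := by
  rcases ht.1.eq_or_lt with rfl | ht0
  · simpa using mul_pos (sin_pos_of_pos_of_lt_pi hθ.1 hθ.2) ha
  · have hsin_t := sin_pos_of_pos_of_lt_pi ht0 (ht.2.trans_lt hθ.2)
    have hsin_θt := sin_nonneg_of_nonneg_of_le_pi (sub_nonneg.2 ht.2) (by linarith [hθ.2])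
    exact add_pos_of_nonneg_of_pos (mul_nonneg hsin_θt ha.le) (mul_pos hsin_t hc)

lemma image_sin_mul_div_Icc {θ a c : ℝ} (hθ : θ ∈ Ioo 0 π) (ha : 0 < a) (hc : 0 < c) :
    (fun t => sin t * c / (sin (θ - t) * a + sin t * c)) '' Icc 0 θ = Icc 0 1 := by
  have hden := fun t (ht : t ∈ Icc 0 θ) => sin_sub_mul_add_sin_mul_pos hθ ht ha hc
  refine Subset.antisymm ?_ ?_
  · rintro _ ⟨t, ht, rfl⟩
    have hsin_t := sin_nonneg_of_nonneg_of_le_pi ht.1 (ht.2.trans hθ.2.le)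
    have hsin_θt := sin_nonneg_of_nonneg_of_le_pi (sub_nonneg.2 ht.2) (by linarith [hθ.2, ht.1])
    exact ⟨div_nonneg (mul_nonneg hsin_t hc.le) (hden t ht).le,
      (div_le_one (hden t ht)).2 (le_add_of_nonneg_left (mul_nonneg hsin_θt ha.le))⟩
  · have hcont : ContinuousOn (fun t => sin t * c / (sin (θ - t) * a + sin t * c)) (Icc 0 θ) :=
      ContinuousOn.div (by fun_prop) (by fun_prop) fun t ht => (hden t ht).ne'
    simpa [(sin_pos_of_pos_of_lt_pi hθ.1 hθ.2).ne', hc.ne'] using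
      intermediate_value_Icc hθ.1.le hcont

lemma gnomonic_image_geodesicArc {e p q w : E} {θ : ℝ} (hθ : θ ∈ Ico 0 π) (hp : 0 < ⟪p, e⟫)
    (hq : 0 < ⟪q, e⟫) (hpq : cos θ • p + sin θ • w = q) :
    gnomonic e '' geodesicArc p w θ = segment ℝ (gnomonic e p) (gnomonic e q) := by
  have harc : geodesicArc p w θ = (fun t => cos t • p + sin t • w) '' Icc 0 θ := by
    ext
    simp [geodesicArc, eq_comm]
  rcases hθ.1.eq_or_lt with rfl | hθ0
  · simp at hpq
    subst hpq
    simp [harc]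
  have hsin : sin θ ≠ 0 := (sin_pos_of_pos_of_lt_pi hθ0 hθ.2).ne'
  have hpt : ∀ t ∈ Icc 0 θ, gnomonic e (cos t • p + sin t • w) =
      AffineMap.lineMap (gnomonic e p) (gnomonic e q)
        (sin t * ⟪q, e⟫ / (sin (θ - t) * ⟪p, e⟫ + sin t * ⟪q, e⟫)) := fun t ht => by
    rw [← gnomonic_smul e _ hsin, sin_smul_arc hpq, gnomonic_smul_add_smul hp.ne' hq.ne'
      (sin_sub_mul_add_sin_mul_pos ⟨hθ0, hθ.2⟩ ht hp hq).ne']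
  rw [harc, image_image, image_congr hpt, ← image_image (AffineMap.lineMap _ _),
    image_sin_mul_div_Icc ⟨hθ0, hθ.2⟩ hp hq, segment_eq_image_lineMap]


lemma geodesicArc_subset_openHemisphere {e p q w : E} {θ : ℝ} (hθ : θ ∈ Ico 0 π)
    (hp : p ∈ openHemisphere e) (hq : 0 < ⟪q, e⟫) (hw : ‖w‖ = 1) (hpw : ⟪p, w⟫ = 0)
    (hpq : cos θ • p + sin θ • w = q) : geodesicArc p w θ ⊆ openHemisphere e := by
  rintro _ ⟨t, ht, rfl⟩
  refine ⟨mem_sphere_zero_iff_norm.2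
    (norm_cos_smul_add_sin_smul (mem_sphere_zero_iff_norm.1 hp.1) hw hpw t), ?_⟩
  rcases hθ.1.eq_or_lt with rfl | hθ0
  · obtain rfl : t = 0 := le_antisymm ht.2 ht.1
    simpa using hp.2
  · refine pos_of_mul_pos_right (a := sin θ) ?_ (sin_pos_of_pos_of_lt_pi hθ0 hθ.2).le
    rw [← real_inner_smul_left, sin_smul_arc hpq, inner_add_left, real_inner_smul_left,
      real_inner_smul_left]
    exact sin_sub_mul_add_sin_mul_pos ⟨hθ0, hθ.2⟩ ht hp.2 hq

lemma lt_pi_of_cos_smul_add_sin_smul_eq {e p q w : E} {θ : ℝ} (hθ : θ ≤ π) (hp : 0 < ⟪p, e⟫)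
    (hq : 0 < ⟪q, e⟫) (hpq : cos θ • p + sin θ • w = q) : θ < π := by
  refine hθ.lt_of_ne ?_
  rintro rfl
  rw [← hpq] at hq
  simp at hq
  linarith

lemma exists_norm_eq_one_inner_eq_zero [FiniteDimensional ℝ E] (hE : 2 ≤ finrank ℝ E) (p : E) :
    ∃ w : E, ‖w‖ = 1 ∧ ⟪p, w⟫ = 0 := by
  have : Nontrivial (ℝ ∙ p)ᗮ := by
    rw [Submodule.nontrivial_iff_ne_bot]
    intro h
    have hsum := (ℝ ∙ p).finrank_add_finrank_orthogonal
    have hspan : finrank ℝ (ℝ ∙ p) ≤ 1 := by simpa using finrank_span_le_card ({p} : Set E)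
    rw [h, finrank_bot] at hsum
    omega
  obtain ⟨w, hw⟩ := exists_norm_eq (ℝ ∙ p)ᗮ zero_le_one
  exact ⟨w, hw, Submodule.inner_right_of_mem_orthogonal (Submodule.mem_span_singleton_self p) w.2⟩

lemma exists_norm_eq_one_inner_eq_zero_smul_eq [FiniteDimensional ℝ E] (hE : 2 ≤ finrank ℝ E)
    {p v : E} (hpv : ⟪p, v⟫ = 0) : ∃ w : E, ‖w‖ = 1 ∧ ⟪p, w⟫ = 0 ∧ ‖v‖ • w = v := by
  rcases eq_or_ne v 0 with rfl | hv
  · obtain ⟨w, hw, hpw⟩ := exists_norm_eq_one_inner_eq_zero hE p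
    exact ⟨w, hw, hpw, by simp⟩
  · exact ⟨‖v‖⁻¹ • v, norm_smul_inv_norm hv, by rw [real_inner_smul_right, hpv, mul_zero],
      smul_inv_smul₀ (norm_ne_zero_iff.2 hv) v⟩

lemma exists_cos_smul_add_sin_smul_eq [FiniteDimensional ℝ E] (hE : 2 ≤ finrank ℝ E) {p q : E}
    (hp : ‖p‖ = 1) (hq : ‖q‖ = 1) :
    ∃ θ ∈ Icc 0 π, ∃ w : E, ‖w‖ = 1 ∧ ⟪p, w⟫ = 0 ∧ cos θ • p + sin θ • w = q := by
  set x := ⟪p, q⟫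
  have hx : |x| ≤ 1 := by simpa [hp, hq] using abs_real_inner_le_norm p q
  have hpv : ⟪p, q - x • p⟫ = 0 := by
    rw [inner_sub_right, real_inner_smul_right, real_inner_self_eq_norm_sq, hp]
    ring
  have hv : ‖q - x • p‖ ^ 2 = 1 - x ^ 2 := by
    rw [norm_sub_sq_real, real_inner_smul_right, norm_smul, real_inner_comm, hp, hq,
      Real.norm_eq_abs, mul_pow, sq_abs]
    ring
  -- `sin (arccos x) = ‖q - x • p‖`; when `q = ±p` this vanishes and any unit `w ⊥ p` will do.
  obtain ⟨w, hw, hpw, hvw⟩ := exists_norm_eq_one_inner_eq_zero_smul_eq hE hpv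
  refine ⟨arccos x, ⟨arccos_nonneg x, arccos_le_pi x⟩, w, hw, hpw, ?_⟩
  rw [cos_arccos (abs_le.1 hx).1 (abs_le.1 hx).2, sin_arccos, ← hv, sqrt_sq (norm_nonneg _), hvw,
    add_sub_cancel]

end Gnomonic

lemma sphConvex_iff_convex_image_gnomonic {n : ℕ} (hn : 1 ≤ n) {e : Euc (n + 1)}
    {S : Set (Euc (n + 1))} (hS : S ⊆ openHemisphere e) :
    SphConvex S ↔ Convex ℝ (gnomonic e '' S) := by
  constructor
  · refine fun h => convex_iff_segment_subset.2 ?_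
    rintro _ ⟨p, hp, rfl⟩ _ ⟨q, hq, rfl⟩
    obtain ⟨_, ⟨θ, hθ, w, -, -, hpq, rfl⟩, hAS⟩ := h p hp q hq
    have hθπ := lt_pi_of_cos_smul_add_sin_smul_eq hθ.2 (hS hp).2 (hS hq).2 hpq
    rw [← gnomonic_image_geodesicArc ⟨hθ.1, hθπ⟩ (hS hp).2 (hS hq).2 hpq]
    exact image_mono hAS
  · intro h p hp q hq
    have hE : 2 ≤ finrank ℝ (Euc (n + 1)) := by rw [finrank_euclideanSpace_fin]; omega
    obtain ⟨θ, hθ, w, hw, hpw, hpq⟩ := exists_cos_smul_add_sin_smul_eq hE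
      (mem_sphere_zero_iff_norm.1 (hS hp).1) (mem_sphere_zero_iff_norm.1 (hS hq).1)
    have hθπ := lt_pi_of_cos_smul_add_sin_smul_eq hθ.2 (hS hp).2 (hS hq).2 hpq
    refine ⟨geodesicArc p w θ, ⟨θ, hθ, w, hw, hpw, hpq, rfl⟩, ?_⟩
    rw [← (gnomonic_injOn e).image_subset_image_iff
      (geodesicArc_subset_openHemisphere ⟨hθ.1, hθπ⟩ (hS hp) (hS hq).2 hw hpw hpq) hS,
      gnomonic_image_geodesicArc ⟨hθ.1, hθπ⟩ (hS hp).2 (hS hq).2 hpq]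
    exact h.segment_subset (mem_image_of_mem _ hp) (mem_image_of_mem _ hq)

theorem gnomonic_projection_homeomorph_and_convexity_general
    {n : ℕ} (hn : 1 ≤ n) (e : Euc (n + 1))
    (Hpos Epl : Set (Euc (n + 1))) (proj : Euc (n + 1) → Euc (n + 1))
    (hHpos : Hpos = {x | x ∈ uSphere n ∧ 0 < ⟪x, e⟫})
    (hEpl : Epl = {y | ⟪y, e⟫ = 1})
    (hproj : ∀ x, proj x = (⟪x, e⟫)⁻¹ • x) :
    (∃ h : Hpos ≃ₜ Epl, ∀ x : Hpos, (h x : Euc (n + 1)) = proj x) ∧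
    ∀ S : Set (Euc (n + 1)), S ⊆ Hpos →
      (SphConvex S ↔ Convex ℝ (proj '' S)) := by
  obtain rfl : proj = gnomonic e := funext hproj
  subst hHpos hEpl
  exact ⟨⟨gnomonicHomeomorph e, fun _ => rfl⟩,
    fun S hS => sphConvex_iff_convex_image_gnomonic hn hS⟩

/-- Central (gnomonic) projection from the open hemisphere
`H₊ = {x ∈ 𝕊ⁿ | ⟪x, e⟫ > 0}` onto the tangent hyperplane `E = {y | ⟪y, e⟫ = 1}` is a
homeomorphism, and it maps spherically convex subsets of `H₊` exactly onto convex sets. -/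
theorem gnomonic_projection_homeomorph_and_convexity
    {n : ℕ} (hn : 1 ≤ n) (e : Euc (n + 1)) (he : ‖e‖ = 1)
    (Hpos Epl : Set (Euc (n + 1))) (proj : Euc (n + 1) → Euc (n + 1))
    (hHpos : Hpos = {x | x ∈ uSphere n ∧ 0 < ⟪x, e⟫})
    (hEpl : Epl = {y | ⟪y, e⟫ = 1})
    (hproj : ∀ x, proj x = (⟪x, e⟫)⁻¹ • x) :
    (∃ h : Hpos ≃ₜ Epl, ∀ x : Hpos, (h x : Euc (n + 1)) = proj x) ∧
    ∀ S : Set (Euc (n + 1)), S ⊆ Hpos →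
      (SphConvex S ↔ Convex ℝ (proj '' S)) :=
  gnomonic_projection_homeomorph_and_convexity_general hn e Hpos Epl proj hHpos hEpl hproj
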